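/- Under the hypotheses of the finite mass theorem (finite mass m, w = m² - |Φ|² ≥ 0 decaying at infinity, Δw = 2|∇Φ|², and the Bochner inequality Δ|∇Φ|² ≤ 2c‖F_∇‖_{L^∞}|∇Φ|² with |∇Φ| decaying at infinity), one has the pointwise bound |∇Φ|² ≤ c‖F_∇‖_{L^∞} (m² - |Φ|²) on all of X. -/

import Mathlib

/-!
With `f = c‖F_∇‖ (m² - |Φ|²) - |∇Φ|²`, the identity `Δw = 2|∇Φ|²` and the Bochner inequality
give `Δf ≥ 0`. Both summands of `f` tend to zero at infinity, so the maximum principle gives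
`f ≥ 0`.
-/

open Filter Topology

theorem tendsto_comap_atTop_nhds_zero_iff {X : Type*} (ρ f : X → ℝ) :
    Tendsto f (comap ρ atTop) (𝓝 0) ↔ ∀ ε > 0, ∃ R, ∀ x, R ≤ ρ x → |f x| ≤ ε := by
  rw [(atTop_basis.comap ρ).tendsto_iff Metric.nhds_basis_closedBall]
  simp

theorem tendsto_comap_atTop_nhds_zero_of_nonneg {X : Type*} {ρ f : X → ℝ} (hf : ∀ x, 0 ≤ f x)
    (hdec : ∀ ε > 0, ∃ R, ∀ x, R ≤ ρ x → f x ≤ ε) : Tendsto f (comap ρ atTop) (𝓝 0) := by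
  simpa only [tendsto_comap_atTop_nhds_zero_iff, abs_of_nonneg (hf _)] using hdec

theorem stmt14_general {X : Type*} [MetricSpace X] (o : X)
    (lap : (X → ℝ) → (X → ℝ))
    (u Φsq : X → ℝ) (m c Fnorm : ℝ)
    (hu0 : ∀ x, 0 ≤ u x)
    (hw0 : ∀ x, 0 ≤ m ^ 2 - Φsq x)
    (hlapw : lap (fun x => m ^ 2 - Φsq x) = fun x => 2 * u x)
    (hBochner : ∀ x, lap u x ≤ 2 * c * Fnorm * u x)
    (hudec : ∀ ε > 0, ∃ R, ∀ x, R ≤ dist o x → u x ≤ ε)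
    (hwdec : ∀ ε > 0, ∃ R, ∀ x, R ≤ dist o x → m ^ 2 - Φsq x ≤ ε)
    (hlaplin : ∀ (a : ℝ) (f g : X → ℝ),
      lap (fun x => a * f x - g x) = fun x => a * lap f x - lap g x)
    (hMax : ∀ f : X → ℝ, (∀ x, 0 ≤ lap f x) →
      (∀ ε > 0, ∃ R, ∀ x, R ≤ dist o x → |f x| ≤ ε) → ∀ x, 0 ≤ f x) :
    ∀ x, u x ≤ c * Fnorm * (m ^ 2 - Φsq x) := by
  set f : X → ℝ := fun x => c * Fnorm * (m ^ 2 - Φsq x) - u x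
  have hlapf : ∀ x, 0 ≤ lap f x := fun x => by
    have hlap : lap f x = c * Fnorm * (2 * u x) - lap u x := by
      rw [hlaplin, hlapw]
    rw [hlap]
    linarith [hBochner x]
  have hfdec : Tendsto f (comap (dist o) atTop) (𝓝 0) := by
    have hu := tendsto_comap_atTop_nhds_zero_of_nonneg hu0 hudec
    have hw := tendsto_comap_atTop_nhds_zero_of_nonneg hw0 hwdec
    simpa using (hw.const_mul (c * Fnorm)).sub hu
  intro x
  linarith [hMax f hlapf ((tendsto_comap_atTop_nhds_zero_iff _ f).mp hfdec) x]

/-- Abstract model: `X` is the complete noncompact manifold with basepoint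
`o` and Laplacian `lap = Δ`; `u = |∇Φ|²`, `Φsq = |Φ|²`, `w = m² - |Φ|² ≥ 0` with
`Δw = 2|∇Φ|²`; the Bochner inequality `Δ|∇Φ|² ≤ 2c‖F_∇‖_{L^∞}|∇Φ|²` holds, and both `u`
and `w` decay uniformly to zero at infinity.  Linearity of `Δ` (`hlaplin`) and the maximum
principle for superharmonic functions decaying at infinity (`hMax`) are hypothesized.
Conclusion: `|∇Φ|² ≤ c‖F_∇‖_{L^∞}(m² - |Φ|²)` pointwise on all of `X`. -/
theorem stmt14 {X : Type*} [MetricSpace X] (o : X)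
    (lap : (X → ℝ) → (X → ℝ))
    (u Φsq : X → ℝ) (m c Fnorm : ℝ)
    (hc : 0 < c) (hFnorm : 0 ≤ Fnorm)
    (hu0 : ∀ x, 0 ≤ u x)
    (hw0 : ∀ x, 0 ≤ m ^ 2 - Φsq x)
    (hlapw : lap (fun x => m ^ 2 - Φsq x) = fun x => 2 * u x)
    (hBochner : ∀ x, lap u x ≤ 2 * c * Fnorm * u x)
    (hudec : ∀ ε > 0, ∃ R, ∀ x, R ≤ dist o x → u x ≤ ε)
    (hwdec : ∀ ε > 0, ∃ R, ∀ x, R ≤ dist o x → m ^ 2 - Φsq x ≤ ε)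
    (hlaplin : ∀ (a : ℝ) (f g : X → ℝ),
      lap (fun x => a * f x - g x) = fun x => a * lap f x - lap g x)
    (hMax : ∀ f : X → ℝ, (∀ x, 0 ≤ lap f x) →
      (∀ ε > 0, ∃ R, ∀ x, R ≤ dist o x → |f x| ≤ ε) → ∀ x, 0 ≤ f x) :
    ∀ x, u x ≤ c * Fnorm * (m ^ 2 - Φsq x) :=
  stmt14_general o lap u Φsq m c Fnorm hu0 hw0 hlapw hBochner hudec hwdec hlaplin hMax
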